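/- arXiv:quant-ph/0307150 — 4 statements merged into one kernel-verified Lean document; each statement's English description precedes it below -/
import Mathlib

section
/- Recursive definitions via the linear fixed-point combinator unfold correctly: if t ≡ (λ!f.u), then (fix !t) reduces in finitely many steps of the register reduction rules of λ_q to u[(fix !t)/f], where fix ≡ ((λ!u.λ!f.(f !((u !u) !f))) !(λ!u.λ!f.(f !((u !u) !f)))). -/
namespace LambdaQ

/-- Constants of the quantum lambda calculus: bits, gate symbols, placeholder. -/
inductive Const where
  | zero | one | hadamard | phaseS | gateR | cnot | gateX | gateY | gateZ | placeholder
  deriving DecidableEq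

/-- Terms of the quantum lambda calculus λ_q. -/
inductive Term where
  | var (x : ℕ)
  | lam (x : ℕ) (body : Term)
  | app (t₁ t₂ : Term)
  | const (c : Const)
  | bang (t : Term)
  | lamBang (x : ℕ) (body : Term)
  deriving DecidableEq

open Term

/-- The placeholder symbol ⊥. -/
def ph : Term := const .placeholder

def freeVars : Term → Finset ℕ
  | var x => {x}
  | lam x b => freeVars b \ {x}
  | app a b => freeVars a ∪ freeVars b
  | const _ => ∅
  | bang t => freeVars t
  | lamBang x b => freeVars b \ {x}

def allVars : Term → Finset ℕ
  | var x => {x}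
  | lam x b => insert x (allVars b)
  | app a b => allVars a ∪ allVars b
  | const _ => ∅
  | bang t => allVars t
  | lamBang x b => insert x (allVars b)

/-- Naive renaming of free occurrences of `y` by `z`. -/
def rename (y z : ℕ) : Term → Term
  | var x => if x = y then var z else var x
  | lam x b => if x = y then lam x b else lam x (rename y z b)
  | app a b => app (rename y z a) (rename y z b)
  | const c => const c
  | bang t => bang (rename y z t)
  | lamBang x b => if x = y then lamBang x b else lamBang x (rename y z b)

def size : Term → ℕ
  | var _ => 1
  | lam _ b => size b + 1
  | app a b => size a + size b + 1
  | const _ => 1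
  | bang t => size t + 1
  | lamBang _ b => size b + 1

theorem size_rename (y z : ℕ) : ∀ t, size (rename y z t) = size t := by
  intro t
  induction t with
  | var x => simp only [rename]; split <;> rfl
  | lam x b ih => simp only [rename]; split <;> simp [size, ih]
  | app a b iha ihb => simp [rename, size, iha, ihb]
  | const c => rfl
  | bang t ih => simp [rename, size, ih]
  | lamBang x b ih => simp only [rename]; split <;> simp [size, ih]

/-- A variable not occurring in the finite set `s`. -/
def fresh (s : Finset ℕ) : ℕ := (s.sup id) + 1

/-- Capture-avoiding substitution `subst v x t = t[v/x]`. -/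
def subst (v : Term) (x : ℕ) : Term → Term
  | var y => if y = x then v else var y
  | const c => const c
  | app a b => app (subst v x a) (subst v x b)
  | bang t => bang (subst v x t)
  | lam y b =>
      if y = x then lam y b
      else if y ∈ freeVars v ∧ x ∈ freeVars b then
        lam (fresh (allVars b ∪ freeVars v ∪ {x}))
          (subst v x (rename y (fresh (allVars b ∪ freeVars v ∪ {x})) b))
      else lam y (subst v x b)
  | lamBang y b =>
      if y = x then lamBang y b
      else if y ∈ freeVars v ∧ x ∈ freeVars b then
        lamBang (fresh (allVars b ∪ freeVars v ∪ {x}))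
          (subst v x (rename y (fresh (allVars b ∪ freeVars v ∪ {x})) b))
      else lamBang y (subst v x b)
  termination_by t => size t
  decreasing_by all_goals (simp [size, size_rename]; try omega)

/-- Values of λ_q: variables, constants, abstractions, !-suspensions. -/
def IsValue : Term → Prop
  | var _ => True
  | const _ => True
  | lam _ _ => True
  | lamBang _ _ => True
  | bang _ => True
  | app _ _ => False

/-- The skeleton Ē_x: replace every maximal subterm not containing x free
by the placeholder ⊥, keeping x. -/
def skel (x : ℕ) : Term → Term
  | var y => if y = x then var y else ph
  | lam y b => if y ≠ x ∧ x ∈ freeVars b then lam y (skel x b) else ph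
  | lamBang y b => if y ≠ x ∧ x ∈ freeVars b then lamBang y (skel x b) else ph
  | app a b => if x ∈ freeVars a ∪ freeVars b then app (skel x a) (skel x b) else ph
  | bang t => if x ∈ freeVars t then bang (skel x t) else ph
  | const _ => ph

/-- Scott-encoded empty list  nil ≡ λ!x.λ!y.(x id). -/
def idT : Term := lam 20 (var 20)
def nilT : Term := lamBang 0 (lamBang 1 (app (var 0) idT))
/-- cons ≡ λh.λt.λ!x.λ!y.((y h) t). -/
def consT : Term := lam 2 (lam 3 (lamBang 0 (lamBang 1 (app (app (var 1) (var 2)) (var 3)))))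
/-- The (unevaluated) pair (a, b) ≡ cons a (cons b nil). -/
def pairE (a b : Term) : Term := app (app consT a) (app (app consT b) nilT)
/-- The evaluated form of (cons a b). -/
def pairV (a b : Term) : Term := lamBang 0 (lamBang 1 (app (app (var 1) a) b))
/-- The evaluated pair value (a, b). -/
def mkPair (a b : Term) : Term := pairV a (pairV b nilT)

/-- The bit constants. -/
def bit : Bool → Term := fun b => const (if b then .one else .zero)

/-- Output of the Hadamard gate on a bit. -/
noncomputable def hadOut : Bool → (Term →₀ ℂ)
  | false => (Real.sqrt 2 : ℂ)⁻¹ • (Finsupp.single (bit false) 1 + Finsupp.single (bit true) 1)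
  | true  => (Real.sqrt 2 : ℂ)⁻¹ • (Finsupp.single (bit false) 1 - Finsupp.single (bit true) 1)

/-- Action of the primitive gate symbols on (encoded) bit values:
`GateApp g φ s` means U|φ⟩ = s for the unitary U named by g. -/
inductive GateApp : Const → Term → (Term →₀ ℂ) → Prop
  | had (b : Bool) : GateApp .hadamard (bit b) (hadOut b)
  | gX (b : Bool) : GateApp .gateX (bit b) (Finsupp.single (bit !b) 1)
  | gY (b : Bool) : GateApp .gateY (bit b)
      ((if b then -Complex.I else Complex.I) • Finsupp.single (bit !b) 1)
  | gZ (b : Bool) : GateApp .gateZ (bit b)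
      ((if b then (-1 : ℂ) else 1) • Finsupp.single (bit b) 1)
  | gS (b : Bool) : GateApp .phaseS (bit b)
      ((if b then Complex.I else 1) • Finsupp.single (bit b) 1)
  | gR (b : Bool) : GateApp .gateR (bit b)
      ((if b then Complex.exp (Complex.I * Real.pi / 4) else 1) • Finsupp.single (bit b) 1)
  | gCnot (a b : Bool) : GateApp .cnot (mkPair (bit a) (bit b))
      (Finsupp.single (mkPair (bit a) (bit (xor a b))) 1)

/-- One step of reduction of a term, producing a history entry and a
superposition of resulting terms (operational model of λ_q). -/
inductive SubStep : Term → Term → (Term →₀ ℂ) → Prop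
  | app1 {t₁ h s} (t₂) : SubStep t₁ h s →
      SubStep (app t₁ t₂) (app h ph) (s.mapDomain fun u => app u t₂)
  | app2 {v t₂ h s} : IsValue v → SubStep t₂ h s →
      SubStep (app v t₂) (app ph h) (s.mapDomain fun u => app v u)
  | beta {x E v} : IsValue v →
      SubStep (app (lam x E) v) (app (lam x (skel x E)) ph) (Finsupp.single (subst v x E) 1)
  | bangBeta1 {x E t'} : x ∈ freeVars E →
      SubStep (app (lamBang x E) (bang t')) (app (lamBang x (skel x E)) ph)
        (Finsupp.single (subst t' x E) 1)
  | bangBeta2 {x E t'} : x ∉ freeVars E →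
      SubStep (app (lamBang x E) (bang t')) (app (lamBang x ph) (bang t')) (Finsupp.single E 1)
  | gate {g φ s} : GateApp g φ s →
      SubStep (app (const g) φ) (app (const g) ph) s

/-- A configuration: history track followed by the computational register. -/
abbrev Config := List Term × Term

/-- A state: finitely supported complex linear combination of configurations. -/
abbrev QState := Config →₀ ℂ

/-- One step of the operational model on a single configuration, producing a state. -/
inductive ConfStep : Config → QState → Prop
  | sub {H t h s} : SubStep t h s →
      ConfStep (H, t) (s.mapDomain fun u => (H ++ [h], u))
  | idStep {H t} : (∀ h s, ¬ SubStep t h s) →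
      ConfStep (H, t) (Finsupp.single (H ++ [ph], t) 1)

/-- One step of the operational model of λ_q, extended linearly to states. -/
def StateStep (ψ ψ' : QState) : Prop :=
  ∃ F : Config → QState, (∀ c ∈ ψ.support, ConfStep c (F c)) ∧
    ψ' = ψ.sum fun c a => a • F c

/-- The register reduction rules of λ_q on a single term, producing a
superposition of terms. -/
inductive RegStep : Term → (Term →₀ ℂ) → Prop
  | app1 {t₁ s} (t₂) : RegStep t₁ s → RegStep (app t₁ t₂) (s.mapDomain fun u => app u t₂)
  | app2 {v t₂ s} : IsValue v → RegStep t₂ s → RegStep (app v t₂) (s.mapDomain fun u => app v u)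
  | beta {x E v} : IsValue v → RegStep (app (lam x E) v) (Finsupp.single (subst v x E) 1)
  | bangBeta {x E t'} : RegStep (app (lamBang x E) (bang t')) (Finsupp.single (subst t' x E) 1)
  | gate {g φ s} : GateApp g φ s → RegStep (app (const g) φ) s

/-- The register reduction rules extended linearly to superpositions of terms. -/
def RegStepS (c c' : Term →₀ ℂ) : Prop :=
  ∃ F : Term → (Term →₀ ℂ), (∀ t ∈ c.support, RegStep t (F t)) ∧
    c' = c.sum fun t a => a • F t

/-- Congruence of terms: they coincide symbol by symbol except possibly at
positions containing the constants 0 or 1. -/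
inductive Congr : Term → Term → Prop
  | bit {c c'} : (c = .zero ∨ c = .one) → (c' = .zero ∨ c' = .one) →
      Congr (const c) (const c')
  | var (x) : Congr (var x) (var x)
  | const (c) : Congr (const c) (const c)
  | lam {b b'} (x) : Congr b b' → Congr (lam x b) (lam x b')
  | lamBang {b b'} (x) : Congr b b' → Congr (lamBang x b) (lamBang x b')
  | app {a a' b b'} : Congr a a' → Congr b b' → Congr (app a b) (app a' b')
  | bang {t t'} : Congr t t' → Congr (bang t) (bang t')


/-- θ ≡ λ!u.λ!f.(f !((u !u) !f)), with u = var 0 and f = var 1. -/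
def theta : Term :=
  .lamBang 0 (.lamBang 1
    (.app (.var 1) (.bang (.app (.app (.var 0) (.bang (.var 0))) (.bang (.var 1))))))

/-- The linear Turing fixed-point combinator fix ≡ (θ !θ). -/
def fixT : Term := .app theta (.bang theta)

/-! `fix !t` performs two `!β`-steps, `θ !θ !t ⟶ (λ!f.(f !(θ !θ !f))) !t ⟶ t !(fix !t)`, the second
one leaving the closed term `fix` untouched by the substitution; for `t ≡ λ!f.u` a third `!β`-step
then yields `u[(fix !t)/f]`. -/

theorem subst_eq_self_of_not_mem_freeVars (v : Term) (x : ℕ) :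
    ∀ t, x ∉ freeVars t → subst v x t = t
  | var y, h => by
    rw [freeVars, Finset.mem_singleton] at h
    simp [subst, Ne.symm h]
  | const _, _ => by rw [subst]
  | app a b, h => by
    simp only [freeVars, Finset.mem_union, not_or] at h
    rw [subst, subst_eq_self_of_not_mem_freeVars v x a h.1,
      subst_eq_self_of_not_mem_freeVars v x b h.2]
  | bang t, h => by
    rw [subst, subst_eq_self_of_not_mem_freeVars v x t h]
  | lam y b, h => by
    rw [subst]
    by_cases hyx : y = x
    · rw [if_pos hyx]
    · have hb : x ∉ freeVars b := by simpa [freeVars, Ne.symm hyx] using h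
      simp [hyx, hb, subst_eq_self_of_not_mem_freeVars v x b hb]
  | lamBang y b, h => by
    rw [subst]
    by_cases hyx : y = x
    · rw [if_pos hyx]
    · have hb : x ∉ freeVars b := by simpa [freeVars, Ne.symm hyx] using h
      simp [hyx, hb, subst_eq_self_of_not_mem_freeVars v x b hb]

theorem freeVars_fixT : freeVars fixT = ∅ := by
  decide

theorem subst_fixT (v : Term) (x : ℕ) : subst v x fixT = fixT :=
  subst_eq_self_of_not_mem_freeVars v x fixT (by simp [freeVars_fixT])

theorem RegStep.regStepS_single {t : Term} {s : Term →₀ ℂ} (h : RegStep t s) :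
    RegStepS (Finsupp.single t 1) s := by
  refine ⟨fun _ => s, fun c hc => ?_, ?_⟩
  · rw [Finsupp.support_single _ one_ne_zero, Finset.mem_singleton] at hc
    exact hc ▸ h
  · rw [Finsupp.sum_single_index] <;> simp

theorem RegStep.app_left_single {t t' : Term} (s : Term) (h : RegStep t (Finsupp.single t' 1)) :
    RegStep (.app t s) (Finsupp.single (.app t' s) 1) := by
  simpa only [Finsupp.mapDomain_single] using RegStep.app1 s h

theorem reflTransGen_regStepS_fixT_app_bang (t : Term) :
    Relation.ReflTransGen RegStepS (Finsupp.single (.app fixT (.bang t)) 1)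
      (Finsupp.single (.app t (.bang (.app fixT (.bang t)))) 1) := by
  have unfold_theta : RegStep fixT
      (Finsupp.single (.lamBang 1 (.app (.var 1) (.bang (.app fixT (.bang (.var 1)))))) 1) := by
    simpa [subst, freeVars, theta, fixT] using @RegStep.bangBeta 0
      (.lamBang 1 (.app (.var 1) (.bang (.app (.app (.var 0) (.bang (.var 0))) (.bang (.var 1))))))
      theta
  have apply_to_t : RegStep (.app (.lamBang 1 (.app (.var 1) (.bang (.app fixT (.bang (.var 1))))))
      (.bang t)) (Finsupp.single (.app t (.bang (.app fixT (.bang t)))) 1) := by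
    simpa [subst, subst_fixT] using
      @RegStep.bangBeta 1 (.app (.var 1) (.bang (.app fixT (.bang (.var 1))))) t
  exact .head (unfold_theta.app_left_single _).regStepS_single
    (.single apply_to_t.regStepS_single)

/-- Recursive definitions via the linear fixed-point
combinator unfold correctly: if t ≡ (λ!f.u), then (fix !t) reduces in finitely
many steps of the register reduction rules of λ_q to u[(fix !t)/f]. -/
theorem fix_recursion (f : ℕ) (u : Term) :
    Relation.ReflTransGen RegStepS
      (Finsupp.single (Term.app fixT (.bang (.lamBang f u))) (1 : ℂ))
      (Finsupp.single (subst (Term.app fixT (.bang (.lamBang f u))) f u) (1 : ℂ)) :=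
  .tail (reflTransGen_regStepS_fixT_app_bang _) RegStep.bangBeta.regStepS_single

end LambdaQ
end

section
/- The Girard-style translation of the classical lambda calculus into λ_q produces well-formed terms: define t* by x* = !x, (λx.t)* = !(λ!x.t*), and (t₁ t₂)* = (((λ!z.z) t₁*) t₂*). Then for every classical untyped lambda term t with free variables contained in {x₁,…,xₙ}, the judgment !x₁,…,!xₙ ⊢ t* is derivable in the well-formedness system of λ_q; in particular, if t is closed then t* is well-formed. -/
namespace LambdaQ

open Term

/-- The well-formedness judgment of λ_q: `WF L N t` formalizes Γ ⊢ t where the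
context Γ consists of the linear assumptions x for x ∈ L and the nonlinear
assumptions !x for x ∈ N (all variables distinct). -/
inductive WF : Finset ℕ → Finset ℕ → Term → Prop
  | const (c) : WF ∅ ∅ (.const c)
  | id (x) : WF {x} ∅ (.var x)
  | promotion {N t} : WF ∅ N t → WF ∅ N (.bang t)
  | dereliction {L N t x} : x ∉ L → x ∉ N → WF (insert x L) N t → WF L (insert x N) t
  | contraction {L N t x y z} : x ≠ y → x ∉ L → x ∉ N → y ∉ L → y ∉ N → z ∉ L → z ∉ N →
      WF L (insert x (insert y N)) t →
      WF L (insert z N) (subst (.var z) y (subst (.var z) x t))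
  | weakening {L N t x} : x ∉ L → x ∉ N → WF L N t → WF L (insert x N) t
  | lamI {L N t x} : x ∉ L → x ∉ N → WF (insert x L) N t → WF L N (.lam x t)
  | lamBangI {L N t x} : x ∉ L → x ∉ N → WF L (insert x N) t → WF L N (.lamBang x t)
  | appE {L₁ N₁ L₂ N₂ t₁ t₂} : Disjoint (L₁ ∪ N₁) (L₂ ∪ N₂) →
      WF L₁ N₁ t₁ → WF L₂ N₂ t₂ → WF (L₁ ∪ L₂) (N₁ ∪ N₂) (.app t₁ t₂)

/-- A term is well-formed if Γ ⊢ t is derivable for some context Γ. -/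
def WellFormed (t : Term) : Prop := ∃ L N, WF L N t

/-- Terms of the classical untyped lambda calculus, viewed inside the term
language (built only from variables, abstraction and application). -/
inductive IsClassical : Term → Prop
  | var (x) : IsClassical (.var x)
  | lam {t} (x) : IsClassical t → IsClassical (.lam x t)
  | app {a b} : IsClassical a → IsClassical b → IsClassical (.app a b)

/-- The translation t* of the classical lambda calculus into λ_q:
x* = !x, (λx.t)* = !(λ!x.t*), (t₁ t₂)* = (((λ!z.z) t₁*) t₂*). -/
def star : Term → Term
  | .var x => .bang (.var x)
  | .lam x t => .bang (.lamBang x (star t))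
  | .app a b => .app (.app (.lamBang 0 (.var 0)) (star a)) (star b)
  | .const c => .const c
  | .bang t => .bang t
  | .lamBang x t => .lamBang x t

lemma fresh_not_mem (s : Finset ℕ) : fresh s ∉ s := by
  intro h
  have := Finset.le_sup (f := id) h
  simp only [id] at this
  simp only [fresh] at this ⊢
  omega

lemma freeVars_subset_allVars : ∀ t, freeVars t ⊆ allVars t := by
  intro t
  induction t with
  | var x => simp [freeVars, allVars]
  | lam x b ih =>
      intro y hy
      simp only [freeVars, Finset.mem_sdiff, Finset.mem_singleton] at hy
      simp only [allVars, Finset.mem_insert]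
      exact Or.inr (ih hy.1)
  | app a b iha ihb =>
      intro y hy
      simp only [freeVars, Finset.mem_union] at hy
      simp only [allVars, Finset.mem_union]
      exact hy.imp (fun h => iha h) (fun h => ihb h)
  | const c => simp [freeVars]
  | bang t ih => simpa [freeVars, allVars] using ih
  | lamBang x b ih =>
      intro y hy
      simp only [freeVars, Finset.mem_sdiff, Finset.mem_singleton] at hy
      simp only [allVars, Finset.mem_insert]
      exact Or.inr (ih hy.1)

lemma subst_not_free {v : Term} {x : ℕ} : ∀ {t : Term}, x ∉ freeVars t → subst v x t = t := by
  intro t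
  induction t with
  | var y =>
      intro h
      simp only [freeVars, Finset.mem_singleton] at h
      simp [subst, Ne.symm h]
  | lam y b ih =>
      intro h
      simp only [freeVars, Finset.mem_sdiff, Finset.mem_singleton, not_and, not_not] at h
      by_cases hyx : y = x
      · simp [subst, hyx]
      · have hxb : x ∉ freeVars b := fun hxb => hyx (h hxb).symm
        simp [subst, hyx, hxb, ih hxb]
  | app a b iha ihb =>
      intro h
      simp only [freeVars, Finset.mem_union] at h
      push_neg at h
      simp [subst, iha h.1, ihb h.2]
  | const c => intro _; simp [subst]
  | bang t ih =>
      intro h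
      simp only [freeVars] at h
      simp [subst, ih h]
  | lamBang y b ih =>
      intro h
      simp only [freeVars, Finset.mem_sdiff, Finset.mem_singleton, not_and, not_not] at h
      by_cases hyx : y = x
      · simp [subst, hyx]
      · have hxb : x ∉ freeVars b := fun hxb => hyx (h hxb).symm
        simp [subst, hyx, hxb, ih hxb]

lemma subst_var_self (x : ℕ) : ∀ t : Term, subst (.var x) x t = t := by
  intro t
  induction t with
  | var y => by_cases h : y = x <;> simp [subst, h]
  | lam y b ih =>
      by_cases hyx : y = x
      · simp [subst, hyx]
      · simp [subst, hyx, freeVars, ih]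
  | app a b iha ihb => simp [subst, iha, ihb]
  | const c => simp [subst]
  | bang t ih => simp [subst, ih]
  | lamBang y b ih =>
      by_cases hyx : y = x
      · simp [subst, hyx]
      · simp [subst, hyx, freeVars, ih]

lemma subst_rename_cancel {x y : ℕ} (hxy : x ≠ y) :
    ∀ {t : Term}, y ∉ allVars t → subst (.var x) y (subst (.var y) x t) = t := by
  intro t
  induction t with
  | var z =>
      intro hy
      simp only [allVars, Finset.mem_singleton] at hy
      by_cases hzx : z = x
      · simp [subst, hzx]
      · have hzy : z ≠ y := fun h => hy h.symm
        simp [subst, hzx, hzy]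
  | lam z b ih =>
      intro hy
      simp only [allVars, Finset.mem_insert] at hy
      push_neg at hy
      obtain ⟨hyz, hyb⟩ := hy
      have hyfb : y ∉ freeVars b := fun h => hyb (freeVars_subset_allVars b h)
      by_cases hzx : z = x
      · simp [subst, hzx, freeVars, hyfb, subst_not_free hyfb]
      · simp [subst, hzx, freeVars, Ne.symm hyz, hyfb, ih hyb]
  | app a b iha ihb =>
      intro hy
      simp only [allVars, Finset.mem_union] at hy
      push_neg at hy
      simp [subst, iha hy.1, ihb hy.2]
  | const c => intro _; simp [subst]
  | bang t ih =>
      intro hy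
      simp only [allVars] at hy
      simp [subst, ih hy]
  | lamBang z b ih =>
      intro hy
      simp only [allVars, Finset.mem_insert] at hy
      push_neg at hy
      obtain ⟨hyz, hyb⟩ := hy
      have hyfb : y ∉ freeVars b := fun h => hyb (freeVars_subset_allVars b h)
      by_cases hzx : z = x
      · simp [subst, hzx, freeVars, hyfb, subst_not_free hyfb]
      · simp [subst, hzx, freeVars, Ne.symm hyz, hyfb, ih hyb]

lemma wf_weaken_union {N : Finset ℕ} {t : Term} (M : Finset ℕ) (h : WF ∅ N t) :
    WF ∅ (N ∪ M) t := by
  induction M using Finset.induction_on with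
  | empty => simpa using h
  | @insert a M ha ih =>
      by_cases hm : a ∈ N ∪ M
      · rwa [Finset.union_insert, Finset.insert_eq_self.2 hm]
      · rw [Finset.union_insert]
        exact WF.weakening (by simp) hm ih

lemma wf_mono {N S : Finset ℕ} {t : Term} (hNS : N ⊆ S) (h : WF ∅ N t) : WF ∅ S t := by
  have := wf_weaken_union S h
  rwa [Finset.union_eq_right.2 hNS] at this

lemma wf_rename {N : Finset ℕ} {t : Term} {x y : ℕ} (hx : x ∉ N) (hy : y ∉ N) (hxy : y ≠ x)
    (h : WF ∅ (insert x N) t) : WF ∅ (insert y N) (subst (.var y) x t) := by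
  have h1 : WF ∅ (insert y (insert x N)) t :=
    WF.weakening (by simp) (by simp [hxy, hy]) h
  rw [Finset.insert_comm] at h1
  have h2 := WF.contraction (x := x) (y := y) (z := y) (L := ∅) (N := N)
    (Ne.symm hxy) (by simp) hx (by simp) hy (by simp) hy h1
  rwa [subst_var_self] at h2

lemma wf_merge_app : ∀ (n : ℕ) (N₁ N₂ : Finset ℕ) (t₁ t₂ : Term), (N₁ ∩ N₂).card ≤ n →
    WF ∅ N₁ t₁ → WF ∅ N₂ t₂ → WF ∅ (N₁ ∪ N₂) (.app t₁ t₂) := by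
  intro n
  induction n with
  | zero =>
      intro N₁ N₂ t₁ t₂ hc h1 h2
      have hd : Disjoint N₁ N₂ := by
        rw [Finset.disjoint_iff_inter_eq_empty, ← Finset.card_eq_zero]
        omega
      have := WF.appE (L₁ := ∅) (N₁ := N₁) (L₂ := ∅) (N₂ := N₂) (by simpa using hd) h1 h2
      simpa using this
  | succ n ih =>
      intro N₁ N₂ t₁ t₂ hc h1 h2
      by_cases hd : Disjoint N₁ N₂
      · have := WF.appE (L₁ := ∅) (N₁ := N₁) (L₂ := ∅) (N₂ := N₂) (by simpa using hd) h1 h2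
        simpa using this
      · rw [Finset.disjoint_iff_inter_eq_empty, ← Finset.not_nonempty_iff_eq_empty,
          not_not] at hd
        obtain ⟨x, hx⟩ := hd
        rw [Finset.mem_inter] at hx
        obtain ⟨hx1, hx2⟩ := hx
        set B : Finset ℕ := N₁ ∪ N₂ ∪ allVars t₁ ∪ allVars t₂ with hB
        set y : ℕ := fresh B with hy
        have hyB : y ∉ B := fresh_not_mem B
        have hyN1 : y ∉ N₁ := fun h => hyB (by simp [hB, h])
        have hyN2 : y ∉ N₂ := fun h => hyB (by simp [hB, h])
        have hyt1 : y ∉ allVars t₁ := fun h => hyB (by simp [hB, h])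
        have hyt2 : y ∉ allVars t₂ := fun h => hyB (by simp [hB, h])
        have hyx : y ≠ x := fun h => hyN1 (h ▸ hx1)
        have h2' : WF ∅ (insert x (N₂.erase x)) t₂ := by
          rwa [Finset.insert_erase hx2]
        have h2'' : WF ∅ (insert y (N₂.erase x)) (subst (.var y) x t₂) :=
          wf_rename (Finset.notMem_erase _ _) (fun h => hyN2 (Finset.mem_of_mem_erase h))
            hyx h2'
        have hcard : (N₁ ∩ insert y (N₂.erase x)).card ≤ n := by
          have he : N₁ ∩ insert y (N₂.erase x) = (N₁ ∩ N₂).erase x := by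
            ext a
            simp only [Finset.mem_inter, Finset.mem_insert, Finset.mem_erase]
            constructor
            · rintro ⟨haN1, hay | ⟨hax, haN2⟩⟩
              · exact absurd (hay ▸ haN1) hyN1
              · exact ⟨hax, haN1, haN2⟩
            · rintro ⟨hax, haN1, haN2⟩
              exact ⟨haN1, Or.inr ⟨hax, haN2⟩⟩
          rw [he, Finset.card_erase_of_mem (Finset.mem_inter.2 ⟨hx1, hx2⟩)]
          omega
        have h3 := ih N₁ (insert y (N₂.erase x)) t₁ (subst (.var y) x t₂) hcard h1 h2''
        set M : Finset ℕ := (N₁.erase x) ∪ (N₂.erase x) with hM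
        have heq : N₁ ∪ insert y (N₂.erase x) = insert x (insert y M) := by
          ext a
          simp only [hM, Finset.mem_union, Finset.mem_insert, Finset.mem_erase]
          constructor
          · rintro (h | h | ⟨hax, h⟩)
            · by_cases hax : a = x
              · exact Or.inl hax
              · exact Or.inr (Or.inr (Or.inl ⟨hax, h⟩))
            · exact Or.inr (Or.inl h)
            · exact Or.inr (Or.inr (Or.inr ⟨hax, h⟩))
          · rintro (h | h | ⟨hax, h⟩ | ⟨hax, h⟩)
            · exact Or.inl (h ▸ hx1)
            · exact Or.inr (Or.inl h)
            · exact Or.inl h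
            · exact Or.inr (Or.inr ⟨hax, h⟩)
        rw [heq] at h3
        have hxM : x ∉ M := by simp [hM]
        have hyM : y ∉ M := by
          simp only [hM, Finset.mem_union, Finset.mem_erase, not_or]
          exact ⟨fun h => hyN1 h.2, fun h => hyN2 h.2⟩
        have h4 := WF.contraction (x := x) (y := y) (z := x) (L := ∅) (N := M)
          (Ne.symm hyx) (by simp) hxM (by simp) hyM (by simp) hxM h3
        rw [subst_var_self] at h4
        have hst : subst (.var x) y (Term.app t₁ (subst (.var y) x t₂)) = .app t₁ t₂ := by
          have e1 : subst (.var x) y t₁ = t₁ :=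
            subst_not_free (fun h => hyt1 (freeVars_subset_allVars t₁ h))
          have e2 : subst (.var x) y (subst (.var y) x t₂) = t₂ :=
            subst_rename_cancel (Ne.symm hyx) hyt2
          simp [subst, e1, e2]
        rw [hst] at h4
        have hfin : insert x M = N₁ ∪ N₂ := by
          ext a
          simp only [hM, Finset.mem_insert, Finset.mem_union, Finset.mem_erase]
          constructor
          · rintro (h | ⟨hax, h⟩ | ⟨hax, h⟩)
            · exact Or.inl (h ▸ hx1)
            · exact Or.inl h
            · exact Or.inr h
          · rintro (h | h)
            · by_cases hax : a = x
              · exact Or.inl hax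
              · exact Or.inr (Or.inl ⟨hax, h⟩)
            · by_cases hax : a = x
              · exact Or.inl hax
              · exact Or.inr (Or.inr ⟨hax, h⟩)
        rwa [hfin] at h4

/-- The Girard-style translation of the classical lambda
calculus into λ_q produces well-formed terms: for every classical term t with
free variables contained in {x₁,…,xₙ}, the judgment !x₁,…,!xₙ ⊢ t* is
derivable; in particular, if t is closed then t* is well-formed. -/
theorem star_well_formed :
    (∀ t : Term, IsClassical t → ∀ S : Finset ℕ, freeVars t ⊆ S → WF ∅ S (star t)) ∧
    (∀ t : Term, IsClassical t → freeVars t = ∅ → WellFormed (star t)) := by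
  have main : ∀ t : Term, IsClassical t → ∀ S : Finset ℕ, freeVars t ⊆ S → WF ∅ S (star t) := by
    intro t ht
    induction ht with
    | var x =>
        intro S hS
        have hx : x ∈ S := hS (by simp [freeVars])
        have h1 : WF ∅ {x} (Term.var x) := by
          have := WF.dereliction (x := x) (L := ∅) (N := ∅) (by simp) (by simp)
            (by simpa using WF.id x)
          simpa using this
        exact WF.promotion (wf_mono (Finset.singleton_subset_iff.2 hx) h1)
    | @lam t x ht ih =>
        intro S hS
        have hsub : freeVars t ⊆ insert x (S.erase x) := by
          intro y hy
          by_cases hyx : y = x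
          · simp [hyx]
          · have : y ∈ S := hS (by simp [freeVars, hy, hyx])
            simp [Finset.mem_insert, Finset.mem_erase, hyx, this]
        have h1 : WF ∅ (insert x (S.erase x)) (star t) := ih _ hsub
        have h2 : WF ∅ (S.erase x) (.lamBang x (star t)) :=
          WF.lamBangI (by simp) (Finset.notMem_erase _ _) h1
        exact WF.promotion (wf_mono (Finset.erase_subset _ _) h2)
    | @app a b ha hb iha ihb =>
        intro S hS
        have h1 : WF ∅ S (star a) := iha S (fun y hy => hS (by simp [freeVars, hy]))
        have h2 : WF ∅ S (star b) := ihb S (fun y hy => hS (by simp [freeVars, hy]))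
        have hid : WF ∅ ∅ (Term.lamBang 0 (.var 0)) := by
          refine WF.lamBangI (by simp) (by simp) ?_
          have := WF.dereliction (x := 0) (L := ∅) (N := ∅) (by simp) (by simp)
            (by simpa using WF.id 0)
          simpa using this
        have h3 : WF ∅ S (.app (.lamBang 0 (.var 0)) (star a)) := by
          have := WF.appE (L₁ := ∅) (N₁ := ∅) (L₂ := ∅) (N₂ := S) (by simp) hid h1
          simpa using this
        have h4 := wf_merge_app (S ∩ S).card S S _ _ le_rfl h3 h2
        simpa [star] using h4
  exact ⟨main, fun t ht h => ⟨∅, ∅, main t ht ∅ (by simp [h])⟩⟩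

end LambdaQ
end

section
/- Deutsch's algorithm in λ_q computes correctly on the cnot oracle: with deutsch ≡ λU.(let (x,y) = (U ((H 0),(H 1))) in ((H x), y)) expressed in λ_q (using the Scott-encoded pair/let constructs), the state |deutsch cnot⟩ reduces under the register reduction rules of λ_q, extended linearly to superpositions, to the state |1⟩ ⊗ (1/√2)(|0⟩ − |1⟩) on the resulting pair of qubits — i.e., to the superposition (1/√2)(|(1,0)⟩ − |(1,1)⟩) of encoded pairs — where the first bit 1 = f(0) ⊕ f(1) indicates that f(x) = x is balanced. -/
namespace LambdaQ

open Term

/-- case e₁ of (nil → e₂, h:t → e₃) ≡ e₁ !(λ!z.e₂) !(λh.λt.e₃)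
(binder z = 21 chosen not free in e₂ below). -/
def caseL (e₁ e₂ : Term) (h t : ℕ) (e₃ : Term) : Term :=
  .app (.app e₁ (.bang (.lamBang 21 e₂))) (.bang (.lam h (.lam t e₃)))

/-- let (x,y) = e in e' ≡ (λ(x,y).e') e, written with nested case analysis. -/
def letPair (x y : ℕ) (e e' : Term) : Term :=
  .app (.lam 22 (caseL (.var 22) nilT x 23 (caseL (.var 23) nilT y 24 e'))) e

/-- deutsch ≡ λU. let (x,y) = U ((H 0),(H 1)) in ((H x), y). -/
def deutschT : Term :=
  .lam 25 (letPair 26 27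
    (.app (.var 25)
      (pairE (.app (.const .hadamard) (.const .zero))
             (.app (.const .hadamard) (.const .one))))
    (pairE (.app (.const .hadamard) (.var 26)) (.var 27)))

/-!
The register reduction is deterministic on terms, so its linear extension sends `∑ i, aᵢ |tᵢ⟩`
to `∑ i, aᵢ sᵢ` whenever `tᵢ ⟶ sᵢ`, also when some of the `tᵢ` coincide: this is where amplitudes
interfere. Between two gate applications all branches perform the same number of closed β- and
!β-steps; a small call-by-value evaluator finds and contracts these redexes and `decide` checks
its runs. The Hadamard gates on `0` and `1` split the computation into four branches `(d, e)`,
the oracle sends `(d, e)` to `(d, d ⊕ e)`, and the final Hadamard gate on `d` splits each branch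
once more. Of the eight resulting branches, those whose first bit is `0` cancel pairwise.
-/

theorem GateApp.isValue {g : Const} {φ : Term} {s : Term →₀ ℂ} (h : GateApp g φ s) :
    IsValue φ := by
  cases h <;> trivial

theorem bit_injective : Function.Injective bit := by
  decide

theorem mkPair_bit_injective {a b a' b' : Bool}
    (h : mkPair (bit a) (bit b) = mkPair (bit a') (bit b')) : a = a' ∧ b = b' := by
  simp only [mkPair, pairV, Term.lamBang.injEq, Term.app.injEq] at h
  exact ⟨bit_injective h.2.2.1.2, bit_injective h.2.2.2.2.2.1.2⟩

theorem GateApp.unique {g : Const} {φ : Term} {s s' : Term →₀ ℂ}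
    (h : GateApp g φ s) (h' : GateApp g φ s') : s = s' := by
  generalize hg : g = g' at h'
  generalize hφ : φ = φ' at h'
  cases h <;> cases h' <;> cases hg
  all_goals first
    | (obtain rfl := bit_injective hφ; rfl)
    | (obtain ⟨rfl, rfl⟩ := mkPair_bit_injective hφ; rfl)

theorem RegStep.not_isValue {t : Term} {s : Term →₀ ℂ} (h : RegStep t s) : ¬IsValue t := by
  cases h <;> exact id

theorem RegStep.unique {t : Term} {s s' : Term →₀ ℂ} (h : RegStep t s) (h' : RegStep t s') :
    s = s' := by
  induction h generalizing s' with
  | app1 t₂ h₁ ih =>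
    cases h' with
    | app1 _ h₁' => rw [ih h₁']
    | app2 hv _ => exact absurd hv h₁.not_isValue
    | beta => exact absurd trivial h₁.not_isValue
    | bangBeta => exact absurd trivial h₁.not_isValue
    | gate => exact absurd trivial h₁.not_isValue
  | app2 hv h₂ ih =>
    cases h' with
    | app1 _ h₁' => exact absurd hv h₁'.not_isValue
    | app2 _ h₂' => rw [ih h₂']
    | beta hv' => exact absurd hv' h₂.not_isValue
    | bangBeta => exact absurd trivial h₂.not_isValue
    | gate hg => exact absurd hg.isValue h₂.not_isValue
  | beta hv =>
    cases h' with
    | app1 _ h₁' => exact absurd trivial h₁'.not_isValue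
    | app2 _ h₂' => exact absurd hv h₂'.not_isValue
    | beta => rfl
  | bangBeta =>
    cases h' with
    | app1 _ h₁' => exact absurd trivial h₁'.not_isValue
    | app2 _ h₂' => exact absurd trivial h₂'.not_isValue
    | bangBeta => rfl
  | gate hg =>
    cases h' with
    | app1 _ h₁' => exact absurd trivial h₁'.not_isValue
    | app2 _ h₂' => exact absurd hg.isValue h₂'.not_isValue
    | gate hg' => exact hg.unique hg'

instance : DecidablePred IsValue := fun t => by
  cases t <;> unfold IsValue <;> infer_instance

inductive Ctx where
  | hole
  | appL (K : Ctx) (t : Term)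
  | appR (v : Term) (K : Ctx)

namespace Ctx

def fill : Ctx → Term → Term
  | hole, t => t
  | appL K u, t => app (K.fill t) u
  | appR v K, t => app v (K.fill t)

def IsEval : Ctx → Prop
  | hole => True
  | appL K _ => K.IsEval
  | appR v K => IsValue v ∧ K.IsEval

end Ctx

theorem RegStep.fill {K : Ctx} (hK : K.IsEval) {t : Term} {s : Term →₀ ℂ} (h : RegStep t s) :
    RegStep (K.fill t) (s.mapDomain K.fill) := by
  induction K with
  | hole => simpa [Ctx.fill] using (Finsupp.mapDomain_id (v := s)).symm ▸ h
  | appL K u ih =>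
    have := RegStep.app1 u (ih hK)
    rwa [← Finsupp.mapDomain_comp] at this
  | appR v K ih =>
    have := RegStep.app2 hK.1 (ih hK.2)
    rwa [← Finsupp.mapDomain_comp] at this

/-- The redex is the leftmost application of a value to a value, as dictated by (app1), (app2). -/
def decompose : Term → Option (Ctx × Term)
  | app t₁ t₂ =>
    if IsValue t₁ then
      if IsValue t₂ then some (.hole, app t₁ t₂)
      else (decompose t₂).map fun (K, r) => (.appR t₁ K, r)
    else (decompose t₁).map fun (K, r) => (.appL K t₂, r)
  | _ => none

theorem decompose_spec {t : Term} {K : Ctx} {r : Term} (h : decompose t = some (K, r)) :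
    K.IsEval ∧ K.fill r = t := by
  induction t generalizing K r with
  | app t₁ t₂ ih₁ ih₂ =>
    simp only [decompose] at h
    split_ifs at h with h₁ h₂
    · cases h
      exact ⟨trivial, rfl⟩
    · obtain ⟨⟨K', r'⟩, hK', he⟩ := Option.map_eq_some_iff.1 h
      cases he
      obtain ⟨hE, hf⟩ := ih₂ hK'
      exact ⟨⟨h₁, hE⟩, by simp [Ctx.fill, hf]⟩
    · obtain ⟨⟨K', r'⟩, hK', he⟩ := Option.map_eq_some_iff.1 h
      cases he
      obtain ⟨hE, hf⟩ := ih₁ hK'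
      exact ⟨hE, by simp [Ctx.fill, hf]⟩
  | _ => cases h

/-- Capture-ignoring substitution: it agrees with `subst` on closed arguments and, unlike the
well-founded `subst`, reduces in the kernel. -/
def nsubst (v : Term) (x : ℕ) : Term → Term
  | var y => if y = x then v else var y
  | const c => const c
  | app a b => app (nsubst v x a) (nsubst v x b)
  | bang t => bang (nsubst v x t)
  | lam y b => if y = x then lam y b else lam y (nsubst v x b)
  | lamBang y b => if y = x then lamBang y b else lamBang y (nsubst v x b)

theorem subst_eq_nsubst {v : Term} (hv : freeVars v = ∅) (x : ℕ) (t : Term) :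
    subst v x t = nsubst v x t := by
  induction t with
  | var y => simp [subst, nsubst]
  | const c => simp [subst, nsubst]
  | app a b iha ihb => simp [subst, nsubst, iha, ihb]
  | bang t ih => simp [subst, nsubst, ih]
  | lam y b ih => by_cases h : y = x <;> simp [subst, nsubst, h, hv, ih]
  | lamBang y b ih => by_cases h : y = x <;> simp [subst, nsubst, h, hv, ih]

def contract : Term → Option Term
  | app (lam x E) v => if IsValue v ∧ freeVars v = ∅ then some (nsubst v x E) else none
  | app (lamBang x E) (bang t) => if freeVars t = ∅ then some (nsubst t x E) else none
  | _ => none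

theorem RegStep.of_contract {r r' : Term} (h : contract r = some r') :
    RegStep r (Finsupp.single r' 1) := by
  unfold contract at h
  split at h
  · split_ifs at h with hv
    cases h
    rw [← subst_eq_nsubst hv.2]
    exact .beta hv.1
  · split_ifs at h with hv
    cases h
    rw [← subst_eq_nsubst hv]
    exact .bangBeta
  · cases h

def detStep (t : Term) : Option Term := do
  let (K, r) ← decompose t
  let r' ← contract r
  return K.fill r'

theorem RegStep.of_detStep {t t' : Term} (h : detStep t = some t') :
    RegStep t (Finsupp.single t' 1) := by
  simp only [detStep, Option.bind_eq_bind, Option.bind_eq_some_iff, Option.pure_def,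
    Option.some.injEq] at h
  obtain ⟨⟨K, r⟩, hd, r', hc, rfl⟩ := h
  obtain ⟨hK, rfl⟩ := decompose_spec hd
  simpa using (RegStep.of_contract hc).fill hK

def detRun : ℕ → Term → Option Term
  | 0, t => some t
  | n + 1, t => (detStep t).bind (detRun n)

def redex (t : Term) : Option Term := (decompose t).map Prod.snd

def context (t : Term) : Ctx := ((decompose t).map Prod.fst).getD .hole

theorem RegStep.of_redex {t r : Term} {s : Term →₀ ℂ} (h : redex t = some r)
    (hr : RegStep r s) : RegStep t (s.mapDomain (context t).fill) := by
  obtain ⟨⟨K, r⟩, hd, rfl⟩ := Option.map_eq_some_iff.1 h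
  obtain ⟨hK, rfl⟩ := decompose_spec hd
  simpa [context, hd] using hr.fill hK

/-- The entry `⟨c|H|b⟩ = (-1)^(b c) / √2` of the Hadamard matrix. -/
noncomputable def hadamardEntry (b c : Bool) : ℂ :=
  (Real.sqrt 2 : ℂ)⁻¹ * if b && c then -1 else 1

theorem hadOut_eq_sum (b : Bool) :
    hadOut b = ∑ c, hadamardEntry b c • Finsupp.single (bit c) 1 := by
  cases b <;> simp only [hadOut, hadamardEntry, Fintype.sum_bool, Bool.and_true, Bool.and_false,
    Bool.false_eq_true, if_true, if_false] <;> module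

section Superposition

variable {ι : Type*} [Fintype ι]

open Relation

/-- The superposition `∑ i, a i |t i⟩`; the terms `t i` need not be distinct. -/
noncomputable def superpos (a : ι → ℂ) (t : ι → Term) : Term →₀ ℂ :=
  ∑ i, a i • Finsupp.single (t i) 1

theorem single_eq_superpos_unit (t : Term) :
    Finsupp.single t 1 = superpos (fun _ : Unit => 1) (fun _ => t) := by
  simp [superpos]

theorem regStepS_superpos {a : ι → ℂ} {t : ι → Term} {s : ι → Term →₀ ℂ}
    (h : ∀ i, RegStep (t i) (s i)) : RegStepS (superpos a t) (∑ i, a i • s i) := by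
  classical
  -- `F` reduces each term through one of its indices; by determinism the choice is immaterial.
  let F : Term → Term →₀ ℂ := fun u => if hu : ∃ i, t i = u then s hu.choose else 0
  have hF : ∀ i, F (t i) = s i := fun i => by
    have hex : ∃ j, t j = t i := ⟨i, rfl⟩
    simp only [F, dif_pos hex]
    exact (hex.choose_spec ▸ h hex.choose).unique (h i)
  refine ⟨F, fun u hu => ?_, ?_⟩
  · obtain ⟨i, -, hi⟩ := Finset.mem_biUnion.1 (Finsupp.support_finsetSum hu)
    obtain rfl := Finset.mem_singleton.1
      (Finsupp.support_single_subset (Finsupp.support_smul hi))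
    exact hF i ▸ h i
  · rw [superpos, ← Finsupp.sum_finsetSum_index (h := fun u c => c • F u)
      (fun _ => zero_smul ℂ _) (fun _ _ _ => add_smul _ _ _)]
    refine Finset.sum_congr rfl fun i _ => ?_
    rw [Finsupp.smul_single_one, Finsupp.sum_single_index (zero_smul ℂ (F (t i))), hF]

/-- All branches make the same number `n` of steps, since `RegStepS` moves every term of a
superposition at once. -/
theorem reflTransGen_superpos_detRun (n : ℕ) {a : ι → ℂ} {t : ι → Term}
    (h : ∀ i, (detRun n (t i)).isSome) :
    ReflTransGen RegStepS (superpos a t) (superpos a fun i => (detRun n (t i)).getD (t i)) := by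
  induction n generalizing t with
  | zero => simpa [detRun] using .refl
  | succ n ih =>
    let u i := (detStep (t i)).getD (t i)
    have hstep (i : ι) : detStep (t i) = some (u i) := by
      obtain ⟨_, hu⟩ := Option.isSome_iff_exists.1 (Option.isSome_of_isSome_bind (h i))
      simp [u, hu]
    have hrun (i : ι) : detRun (n + 1) (t i) = detRun n (u i) := by
      rw [detRun, hstep i, Option.bind_some]
    have hend (i : ι) : (detRun (n + 1) (t i)).getD (t i) = (detRun n (u i)).getD (u i) := by
      obtain ⟨_, hv⟩ := Option.isSome_iff_exists.1 (hrun i ▸ h i)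
      rw [hrun i, hv, Option.getD_some, Option.getD_some]
    simp only [hend]
    exact .head (regStepS_superpos fun i => RegStep.of_detStep (hstep i)) (ih fun i => hrun i ▸ h i)

theorem regStepS_superpos_hadamard {a : ι → ℂ} {t : ι → Term} (b : ι → Bool)
    (h : ∀ i, redex (t i) = some (app (const .hadamard) (bit (b i)))) :
    RegStepS (superpos a t)
      (superpos (fun p : ι × Bool => a p.1 * hadamardEntry (b p.1) p.2)
        fun p => (context (t p.1)).fill (bit p.2)) := by
  convert regStepS_superpos (a := a) fun i => RegStep.of_redex (h i) (.gate (.had (b i))) using 1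
  rw [superpos, Fintype.sum_prod_type]
  refine Finset.sum_congr rfl fun i _ => ?_
  rw [hadOut_eq_sum, Finsupp.mapDomain_finsetSum, Finset.smul_sum]
  refine Finset.sum_congr rfl fun c _ => ?_
  rw [Finsupp.mapDomain_smul, Finsupp.mapDomain_single, smul_smul]

theorem regStepS_superpos_cnot {a : ι → ℂ} {t : ι → Term} (x y : ι → Bool)
    (h : ∀ i, redex (t i) = some (app (const .cnot) (mkPair (bit (x i)) (bit (y i))))) :
    RegStepS (superpos a t)
      (superpos a fun i => (context (t i)).fill (mkPair (bit (x i)) (bit (xor (x i) (y i))))) := by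
  convert regStepS_superpos (a := a)
    fun i => RegStep.of_redex (h i) (.gate (.gCnot (x i) (y i))) using 1
  simp [superpos]

end Superposition

theorem inv_sqrt_two_mul_self : (Real.sqrt 2 : ℂ)⁻¹ * (Real.sqrt 2 : ℂ)⁻¹ = 2⁻¹ := by
  rw [← mul_inv, ← Complex.ofReal_mul, Real.mul_self_sqrt zero_le_two]
  norm_num

theorem deutsch_interference :
    superpos (fun p : ((Unit × Bool) × Bool) × Bool =>
        hadamardEntry false p.1.1.2 * hadamardEntry true p.1.2 * hadamardEntry p.1.1.2 p.2)
      (fun p => mkPair (bit p.2) (bit (xor p.1.1.2 p.1.2))) =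
    (Real.sqrt 2 : ℂ)⁻¹ • (Finsupp.single (mkPair (.const .one) (.const .zero)) 1
      - Finsupp.single (mkPair (.const .one) (.const .one)) 1) := by
  simp only [superpos, Fintype.sum_prod_type, Fintype.sum_bool, Finset.univ_unique,
    Finset.sum_singleton, hadamardEntry, bit, Bool.and_true, Bool.and_false, Bool.true_and,
    Bool.false_and, Bool.xor_false, Bool.xor_true, Bool.not_true, Bool.not_false,
    Bool.false_eq_true, if_true, if_false]
  match_scalars <;> grind [inv_sqrt_two_mul_self]

/-- Deutsch's algorithm computes correctly on the cnot
oracle: |deutsch cnot⟩ reduces under the register reduction rules of λ_q,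
extended linearly to superpositions, to (1/√2)(|(1,0)⟩ − |(1,1)⟩), i.e. to
|1⟩ ⊗ (1/√2)(|0⟩ − |1⟩) on the resulting pair of qubits; the first bit
1 = f(0) ⊕ f(1) indicates that f(x) = x is balanced. -/
theorem deutsch_cnot :
    Relation.ReflTransGen RegStepS
      (Finsupp.single (Term.app deutschT (.const .cnot)) (1 : ℂ))
      ((Real.sqrt 2 : ℂ)⁻¹ •
        (Finsupp.single (mkPair (.const .one) (.const .zero)) 1
          - Finsupp.single (mkPair (.const .one) (.const .one)) 1)) := by
  rw [single_eq_superpos_unit]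
  -- A branch is indexed by `(((), d), e), f)`: the outcomes of `H 0`, `H 1` and `H d`.
  refine .trans (reflTransGen_superpos_detRun 1 (by decide)) ?_
  refine .head (regStepS_superpos_hadamard (fun _ => false) (by decide)) ?_
  refine .trans (reflTransGen_superpos_detRun 1 (by decide)) ?_
  refine .head (regStepS_superpos_hadamard (fun _ => true) (by decide)) ?_
  refine .trans (reflTransGen_superpos_detRun 3 (by decide)) ?_
  refine .head (regStepS_superpos_cnot (fun p => p.1.2) (fun p => p.2) (by decide)) ?_
  refine .trans (reflTransGen_superpos_detRun 9 (by decide)) ?_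
  refine .head (regStepS_superpos_hadamard (fun p => p.1.2) (by decide)) ?_
  refine .trans (reflTransGen_superpos_detRun 4 (by decide)) ?_
  rw [← deutsch_interference]
  convert Relation.ReflTransGen.refl using 2
  · exact funext fun _ => by ring
  · exact funext (by decide)

end LambdaQ
end

section
/- In the intermediate calculus λ_i with history tracking, the double Hadamard computation disentangles: starting from the basis configuration |(H (H 0))⟩, two steps of the operational model yield the product state |(⊥ (H ⊥)) ; (H ⊥)⟩ ⊗ |0⟩, i.e., the computational register factors out as |0⟩, consistent with H² |0⟩ = |0⟩, and the history is definite. -/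
namespace LambdaQ

open Term

/-- The Hadamard constant term. -/
def Hc : Term := .const .hadamard
/-- First history entry. -/
def h₁T : Term := .app ph (.app Hc ph)
/-- Second history entry. -/
def h₂T : Term := .app Hc ph
/-- The two intermediate configurations. -/
def cB (b : Bool) : Config := ([h₁T], Term.app Hc (bit b))
/-- The outcome states of the second step. -/
noncomputable def SB (b : Bool) : QState :=
  Finsupp.mapDomain (fun u => (([h₁T, h₂T] : List Term), u)) (hadOut b)

lemma sqrt2_inv_sq : ((Real.sqrt 2 : ℝ) : ℂ)⁻¹ * (2 * ((Real.sqrt 2 : ℝ) : ℂ)⁻¹) = 1 := by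
  have h : ((Real.sqrt 2 : ℝ) : ℂ) * ((Real.sqrt 2 : ℝ) : ℂ) = 2 := by
    rw [← Complex.ofReal_mul, Real.mul_self_sqrt (by norm_num : (0:ℝ) ≤ 2)]
    norm_num
  have hne : ((Real.sqrt 2 : ℝ) : ℂ) ≠ 0 := by
    intro h0
    rw [h0] at h
    simp at h
  field_simp
  linear_combination -h

/-- In the intermediate calculus λ_i with history tracking
(whose rules on the fragment used here coincide with the operational model
formalized above), the double Hadamard computation disentangles: starting from
the basis configuration |(H (H 0))⟩, two steps of the operational model yield
the product state |(⊥ (H ⊥)) ; (H ⊥)⟩ ⊗ |0⟩, i.e. the final state is the basis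
state with definite history [(⊥ (H ⊥)), (H ⊥)] and computational register 0,
consistent with H² |0⟩ = |0⟩. -/
theorem double_hadamard_disentangles :
    ∃ ψ₁ : QState,
      StateStep
        (Finsupp.single
          (([] : List Term),
            Term.app (.const .hadamard) (Term.app (.const .hadamard) (.const .zero)))
          (1 : ℂ)) ψ₁ ∧
      StateStep ψ₁
        (Finsupp.single
          ([Term.app ph (Term.app (.const .hadamard) ph),
            Term.app (.const .hadamard) ph],
           (Term.const .zero : Term)) (1 : ℂ)) := by
  classical
  set a : ℂ := ((Real.sqrt 2 : ℝ) : ℂ)⁻¹ with ha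
  -- the intermediate state
  set ψ₁ : QState := Finsupp.single (cB false) a + Finsupp.single (cB true) a with hψ₁
  refine ⟨ψ₁, ?_, ?_⟩
  · -- first step
    refine ⟨fun _ => ψ₁, ?_, ?_⟩
    · intro c hc
      rw [Finsupp.support_single_ne_zero _ one_ne_zero, Finset.mem_singleton] at hc
      subst hc
      have step : ConfStep (([] : List Term),
          Term.app Hc (Term.app Hc (Term.const .zero)))
          (Finsupp.mapDomain (fun u => (([] : List Term) ++ [h₁T], u))
            ((hadOut false).mapDomain fun u => Term.app Hc u)) :=
        ConfStep.sub (SubStep.app2 (v := Hc) trivial (SubStep.gate (GateApp.had false)))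
      have heq : (Finsupp.mapDomain (fun u => (([] : List Term) ++ [h₁T], u))
            ((hadOut false).mapDomain fun u => Term.app Hc u)) = ψ₁ := by
        simp only [hadOut, Finsupp.mapDomain_smul, Finsupp.mapDomain_add,
          Finsupp.mapDomain_single, smul_add, Finsupp.smul_single, smul_eq_mul, mul_one,
          hψ₁, cB, bit, List.nil_append]
        rfl
      rw [heq] at step
      exact step
    · rw [Finsupp.sum_single_index (by simp), one_smul]
  · -- second step
    refine ⟨fun c => if c = cB false then SB false else SB true, ?_, ?_⟩
    · intro c hc
      have hsub : ψ₁.support ⊆ {cB false} ∪ {cB true} := by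
        rw [hψ₁]
        refine Finsupp.support_add.trans ?_
        exact Finset.union_subset_union (Finsupp.support_single_subset)
          (Finsupp.support_single_subset)
      have hmem := hsub hc
      simp only [Finset.mem_union, Finset.mem_singleton] at hmem
      rcases hmem with h | h <;> subst h <;> dsimp only
      · rw [if_pos rfl]
        exact ConfStep.sub (SubStep.gate (GateApp.had false))
      · rw [if_neg (by decide)]
        exact ConfStep.sub (SubStep.gate (GateApp.had true))
    · dsimp only
      rw [hψ₁, Finsupp.sum_add_index' (fun c => by simp) (fun c x y => add_smul x y _),
        Finsupp.sum_single_index (by simp), Finsupp.sum_single_index (by simp),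
        if_pos rfl, if_neg (by decide : cB true ≠ cB false)]
      have hsum : SB false + SB true =
          (2 * a) • Finsupp.single (([h₁T, h₂T] : List Term), bit false) (1 : ℂ) := by
        have mds : ∀ (f : Term → Config) (x y : Term →₀ ℂ),
            Finsupp.mapDomain f (x - y) = Finsupp.mapDomain f x - Finsupp.mapDomain f y :=
          fun f x y => (Finsupp.mapDomain.addMonoidHom f).map_sub x y
        simp only [SB, hadOut, Finsupp.mapDomain_smul, Finsupp.mapDomain_add, mds,
          Finsupp.mapDomain_single]
        rw [← smul_add]
        rw [show ∀ x y : QState, (x + y) + (x - y) = 2 • x from fun x y => by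
          abel]
        rw [smul_comm, ← Nat.cast_smul_eq_nsmul ℂ]
        rw [smul_smul]
        norm_num
        rfl
      rw [← smul_add, hsum, smul_smul, sqrt2_inv_sq, one_smul]
      rfl

end LambdaQ
end
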